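/- Fix the total degree lexicographic order ≺ on ℕⁿ (compare by total degree first, then lexicographically). For F ⊆ K[x₁,…,xₙ], let Λ_F = {λ ∈ ℕⁿ : there exists ψ ∈ H_F whose ≺-largest exponent with nonzero coefficient equals λ}. If λ ∈ Λ_F and λⱼ ≥ 1 for some j, then λ − eⱼ ∈ Λ_F (and moreover λ − eⱼ ≺ λ). In other words, the set of head-term exponents of H_F is closed under componentwise decrement. -/
import Mathlib


open MvPolynomial

noncomputable def contract {K : Type*} [Field K] {n : ℕ}
    (f ψ : MvPolynomial (Fin n) K) : MvPolynomial (Fin n) K :=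
  ∑ a ∈ f.support, ∑ l ∈ ψ.support,
    if a ≤ l then monomial (l - a) (f.coeff a * ψ.coeff l) else 0

/-- `H_S`: the algebraic local cohomology classes annihilated by all of `S`. -/
def Hset {K : Type*} [Field K] {n : ℕ} (S : Set (MvPolynomial (Fin n) K)) :
    Set (MvPolynomial (Fin n) K) :=
  {ψ | ∀ f ∈ S, contract f ψ = 0}

/-- Total degree lexicographic order on exponent vectors: smaller total degree,
or equal total degree and lexicographically smaller. -/
def degLexLT {n : ℕ} (a b : Fin n →₀ ℕ) : Prop :=
  (∑ i : Fin n, a i) < (∑ i : Fin n, b i) ∨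
  ((∑ i : Fin n, a i) = (∑ i : Fin n, b i) ∧
    ∃ j : Fin n, (∀ i : Fin n, i < j → a i = b i) ∧ a j < b j)

/-- `l` is the exponent of the head term of `ψ` w.r.t. `degLexLT`. -/
def IsHeadExp {K : Type*} [Field K] {n : ℕ}
    (ψ : MvPolynomial (Fin n) K) (l : Fin n →₀ ℕ) : Prop :=
  l ∈ ψ.support ∧ ∀ m ∈ ψ.support, m ≠ l → degLexLT m l

/-- The set of head-term exponents of nonzero elements of `H_F`. -/
def headExps {K : Type*} [Field K] {n : ℕ} (F : Set (MvPolynomial (Fin n) K)) :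
    Set (Fin n →₀ ℕ) :=
  {l | ∃ ψ ∈ Hset F, ψ ≠ 0 ∧ IsHeadExp ψ l}

lemma coeff_contract {K : Type*} [Field K] {n : ℕ}
    (f ψ : MvPolynomial (Fin n) K) (m : Fin n →₀ ℕ) :
    (contract f ψ).coeff m = ∑ a ∈ f.support, f.coeff a * ψ.coeff (m + a) := by
  unfold contract
  rw [MvPolynomial.coeff_sum]
  refine Finset.sum_congr rfl fun a _ => ?_
  rw [MvPolynomial.coeff_sum]
  have key : ∀ l ∈ ψ.support,
      MvPolynomial.coeff m (if a ≤ l then monomial (l - a) (f.coeff a * ψ.coeff l) else 0)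
      = if l = m + a then f.coeff a * ψ.coeff l else 0 := by
    intro l _
    split_ifs with h1 h2 h2
    · rw [coeff_monomial, if_pos]
      rw [h2, add_tsub_cancel_right]
    · rw [coeff_monomial, if_neg]
      intro he
      exact h2 (by rw [← he, tsub_add_cancel_of_le h1])
    · exact absurd (h2 ▸ le_add_self : a ≤ l) h1
    · simp
  rw [Finset.sum_congr rfl key, Finset.sum_ite_eq' ψ.support (m + a)]
  by_cases hm : m + a ∈ ψ.support
  · rw [if_pos hm]
  · rw [if_neg hm, MvPolynomial.notMem_support_iff.mp hm, mul_zero]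

lemma contract_zero' {K : Type*} [Field K] {n : ℕ} (f : MvPolynomial (Fin n) K) :
    contract f (0 : MvPolynomial (Fin n) K) = 0 := by
  unfold contract; simp

lemma contract_contract {K : Type*} [Field K] {n : ℕ}
    (f g ψ : MvPolynomial (Fin n) K) :
    contract f (contract g ψ) = contract g (contract f ψ) := by
  ext m
  simp only [coeff_contract, Finset.mul_sum]
  rw [Finset.sum_comm]
  refine Finset.sum_congr rfl fun b _ => Finset.sum_congr rfl fun a _ => ?_
  rw [add_right_comm]
  ring

lemma coeff_contract_X {K : Type*} [Field K] {n : ℕ}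
    (ψ : MvPolynomial (Fin n) K) (j : Fin n) (m : Fin n →₀ ℕ) :
    (contract (X j) ψ).coeff m = ψ.coeff (m + Finsupp.single j 1) := by
  rw [coeff_contract, MvPolynomial.support_X, Finset.sum_singleton]
  simp [coeff_X']

lemma degLexLT_of_add_right {n : ℕ} {a b c : Fin n →₀ ℕ}
    (h : degLexLT (a + c) (b + c)) : degLexLT a b := by
  unfold degLexLT at h ⊢
  simp only [Finsupp.add_apply, Finset.sum_add_distrib] at h
  rcases h with h | ⟨heq, j, hlt, hj⟩
  · exact Or.inl (by omega)
  · refine Or.inr ⟨by omega, j, fun i hi => by have := hlt i hi; omega, by omega⟩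

theorem headExps_closed_under_decrement
    {K : Type*} [Field K] {n : ℕ} (F : Set (MvPolynomial (Fin n) K)) :
    ∀ l ∈ headExps F, ∀ j : Fin n, 1 ≤ l j →
      l - Finsupp.single j 1 ∈ headExps F ∧
      degLexLT (l - Finsupp.single j 1) l := by
  rintro l ⟨ψ, hψF, hψ0, hl, hhead⟩ j hj
  set e : Fin n →₀ ℕ := Finsupp.single j 1 with he
  have hle : e ≤ l := by
    rw [he, Finsupp.single_le_iff]; exact hj
  have hsub : l - e + e = l := tsub_add_cancel_of_le hle
  set ψ' : MvPolynomial (Fin n) K := contract (X j) ψ with hψ'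
  have hcoeff : ∀ m, ψ'.coeff m = ψ.coeff (m + e) := fun m => coeff_contract_X ψ j m
  have hcl : ψ'.coeff (l - e) = ψ.coeff l := by rw [hcoeff, hsub]
  have hlne : ψ.coeff l ≠ 0 := MvPolynomial.mem_support_iff.mp hl
  have hmem : ψ' ∈ Hset F := by
    intro f hf
    rw [hψ', contract_contract, hψF f hf, contract_zero']
  have hne : ψ' ≠ 0 := fun h => hlne (by rw [← hcl, h, MvPolynomial.coeff_zero])
  have hsupp : l - e ∈ ψ'.support := MvPolynomial.mem_support_iff.mpr (hcl ▸ hlne)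
  refine ⟨⟨ψ', hmem, hne, hsupp, ?_⟩, ?_⟩
  · intro m hm hmne
    have hmψ : m + e ∈ ψ.support :=
      MvPolynomial.mem_support_iff.mpr (by rw [← hcoeff]; exact MvPolynomial.mem_support_iff.mp hm)
    have hne2 : m + e ≠ l := by
      intro hEq
      exact hmne (by rw [← add_tsub_cancel_right m e, hEq])
    have := hhead (m + e) hmψ hne2
    rw [← hsub] at this
    exact degLexLT_of_add_right this
  · left
    have h1 : ∀ i : Fin n, (l - e) i ≤ l i := by
      intro i; rw [Finsupp.tsub_apply]; omega
    have h2 : (l - e) j < l j := by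
      rw [Finsupp.tsub_apply, he, Finsupp.single_apply, if_pos rfl]; omega
    exact Finset.sum_lt_sum (fun i _ => h1 i) ⟨j, Finset.mem_univ j, h2⟩
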